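/- arXiv:1512.01013 — 10 statements merged into one kernel-verified Lean document; each statement's English description precedes it below -/
import Mathlib

section
/- (Theorem 1) If π₀ > c/(1+c), then there exists t > 0 such that for every z ∈ ℝ^m with ‖z‖₂ < t, the posterior probability ν_z({0}) of the point mass at the origin exceeds 1/2, and consequently for every coordinate i ∈ {1,…,m}, 0 is a median of the pushforward of ν_z under the i-th coordinate projection (i.e., the marginal posterior median Med(μ_i | z) equals 0). -/
open MeasureTheory
open scoped ENNReal

/-- **Theorem 1 (posterior median thresholding at the group level).**
Spike-and-slab prior `π₀ δ₀ + (1-π₀) γ(μ) dμ` on `ℝ^m` with likelihood `f(z-μ)`,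
where `f` is a continuous probability density maximized at the origin with `f 0 > 0`
and `γ` is a probability density.  The posterior given `Z = z` is
`ν_z = [π₀ f(z) δ₀ + (1-π₀) f(z-μ)γ(μ) dμ] / [π₀ f(z) + (1-π₀) ∫ f(z-v)γ(v) dv]`.
Set `c = (∫ f(-v)γ(v) dv)/f 0`.  If `π₀ > c/(1+c)`, then there exists `t > 0` such
that whenever `‖z‖₂ < t`, the posterior mass of `{0}` exceeds `1/2`, and consequently
for every coordinate `i`, `0` is a median of the marginal posterior of `μ_i`
(i.e. `Med(μ_i | z) = 0`). -/
theorem posterior_median_thresholding (m : ℕ) (hm : 1 ≤ m)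
    (f γ : (Fin m → ℝ) → ℝ)
    (hf_cont : Continuous f)
    (hf_nonneg : ∀ x, 0 ≤ f x)
    (hf_int : ∫ x, f x = 1)
    (hf_max : ∀ x, f x ≤ f 0)
    (hf_pos : 0 < f 0)
    (hγ_meas : Measurable γ)
    (hγ_nonneg : ∀ x, 0 ≤ γ x)
    (hγ_int : ∫ x, γ x = 1)
    (π₀ : ℝ) (hπ₀ : 0 < π₀) (hπ₁ : π₀ < 1)
    (hπc : π₀ > ((∫ v, f (-v) * γ v) / f 0) / (1 + (∫ v, f (-v) * γ v) / f 0))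
    (ν : (Fin m → ℝ) → Measure (Fin m → ℝ))
    (hν : ∀ z, ν z =
      (ENNReal.ofReal (π₀ * f z + (1 - π₀) * ∫ v, f (z - v) * γ v))⁻¹ •
        (ENNReal.ofReal (π₀ * f z) • Measure.dirac (0 : Fin m → ℝ) +
          ENNReal.ofReal (1 - π₀) •
            volume.withDensity (fun μ => ENNReal.ofReal (f (z - μ) * γ μ)))) :
    ∃ t > (0 : ℝ), ∀ z : Fin m → ℝ,
      Real.sqrt (∑ i, z i ^ 2) < t →
      (1 / 2 : ℝ≥0∞) < ν z {0} ∧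
        ∀ i : Fin m,
          (1 / 2 : ℝ≥0∞) ≤ (ν z).map (fun μ => μ i) (Set.Iic 0) ∧
          (1 / 2 : ℝ≥0∞) ≤ (ν z).map (fun μ => μ i) (Set.Ici 0) := by
  haveI : Nonempty (Fin m) := Fin.pos_iff_nonempty.mp hm
  -- integrability of γ
  have hγ_integrable : Integrable γ := by
    by_contra h
    rw [integral_undef h] at hγ_int
    norm_num at hγ_int
  set I : ℝ := ∫ v, f (-v) * γ v with hI
  have hI_nonneg : 0 ≤ I :=
    integral_nonneg fun v => mul_nonneg (hf_nonneg _) (hγ_nonneg _)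
  -- the key strict inequality π₀ f 0 > (1-π₀) I
  have hkey : (1 - π₀) * I < π₀ * f 0 := by
    have hc : 0 ≤ I / f 0 := div_nonneg hI_nonneg hf_pos.le
    have h1c : (0:ℝ) < 1 + I / f 0 := by linarith
    have h2 : I / f 0 < π₀ * (1 + I / f 0) := (div_lt_iff₀ h1c).mp hπc
    have h3 : I / f 0 * f 0 = I := div_mul_cancel₀ I hf_pos.ne'
    nlinarith [hf_pos]
  -- the convolution-type function
  set h : (Fin m → ℝ) → ℝ := fun z => ∫ v, f (z - v) * γ v with hh
  have hF_meas : ∀ z : Fin m → ℝ,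
      AEStronglyMeasurable (fun v => f (z - v) * γ v) volume := fun z =>
    ((hf_cont.measurable.comp (measurable_const.sub measurable_id)).mul
      hγ_meas).aestronglyMeasurable
  have hh_nonneg : ∀ z, 0 ≤ h z := fun z =>
    integral_nonneg fun v => mul_nonneg (hf_nonneg _) (hγ_nonneg _)
  have hh_cont : ContinuousAt h 0 := by
    apply continuousAt_of_dominated (bound := fun v => f 0 * γ v)
    · exact Filter.Eventually.of_forall hF_meas
    · refine Filter.Eventually.of_forall fun z => Filter.Eventually.of_forall fun v => ?_
      rw [Real.norm_eq_abs, abs_of_nonneg (mul_nonneg (hf_nonneg _) (hγ_nonneg _))]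
      exact mul_le_mul_of_nonneg_right (hf_max _) (hγ_nonneg _)
    · exact hγ_integrable.const_mul _
    · refine Filter.Eventually.of_forall fun v => ?_
      exact ((hf_cont.comp (continuous_id.sub continuous_const)).mul
        continuous_const).continuousAt
  have hh0 : h 0 = I := by simp only [hh, zero_sub, hI]
  -- g is positive in a neighborhood of 0
  set g : (Fin m → ℝ) → ℝ := fun z => π₀ * f z - (1 - π₀) * h z with hg
  have hg_cont : ContinuousAt g 0 :=
    ((continuous_const.mul hf_cont).continuousAt).sub (continuousAt_const.mul hh_cont)
  have hg0 : 0 < g 0 := by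
    simp only [hg, hh0]; linarith
  have hev : ∀ᶠ z in nhds (0 : Fin m → ℝ), 0 < g z :=
    hg_cont.eventually (eventually_gt_nhds hg0)
  rw [Metric.eventually_nhds_iff] at hev
  obtain ⟨t, ht, hball⟩ := hev
  refine ⟨t, ht, fun z hz => ?_⟩
  -- the sup norm is at most the Euclidean norm
  have hzg : 0 < g z := by
    apply hball
    rw [dist_zero_right]
    rw [pi_norm_lt_iff ht]
    intro i
    calc ‖z i‖ = Real.sqrt (z i ^ 2) := by
          rw [Real.sqrt_sq_eq_abs, Real.norm_eq_abs]
      _ ≤ Real.sqrt (∑ j, z j ^ 2) := by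
          apply Real.sqrt_le_sqrt
          exact Finset.single_le_sum (fun j _ => sq_nonneg (z j)) (Finset.mem_univ i)
      _ < t := hz
  have hfz : 0 < f z := by
    have h1 : 0 ≤ (1 - π₀) * h z := mul_nonneg (by linarith) (hh_nonneg z)
    have h2 : 0 < π₀ * f z := by simp only [hg] at hzg; linarith
    nlinarith
  set D : ℝ := π₀ * f z + (1 - π₀) * h z with hD
  have hD_pos : 0 < D := by
    have h1 := mul_nonneg (show (0:ℝ) ≤ 1 - π₀ by linarith) (hh_nonneg z)
    have h2 := mul_pos hπ₀ hfz
    rw [hD]; linarith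
  -- compute ν z {0}
  have hνz : ν z {0} = ENNReal.ofReal (π₀ * f z / D) := by
    rw [hν z]
    simp only [Measure.smul_apply, Measure.coe_add, Pi.add_apply, smul_eq_mul]
    rw [Measure.dirac_apply' _ (measurableSet_singleton 0),
      withDensity_apply _ (measurableSet_singleton 0)]
    have hsing : (volume : Measure (Fin m → ℝ)) {0} = 0 := measure_singleton 0
    rw [Measure.restrict_eq_zero.mpr hsing]
    simp only [lintegral_zero_measure, mul_zero, add_zero]
    rw [Set.indicator_of_mem (Set.mem_singleton (0 : Fin m → ℝ))]
    simp only [Pi.one_apply, mul_one]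
    rw [ENNReal.ofReal_div_of_pos hD_pos, ENNReal.div_eq_inv_mul]
  have hmain : (1 / 2 : ℝ≥0∞) < ν z {0} := by
    rw [hνz]
    have h12 : (1/2 : ℝ≥0∞) = ENNReal.ofReal (1/2) := by
      rw [ENNReal.ofReal_div_of_pos (by norm_num)]; norm_num
    rw [h12, ENNReal.ofReal_lt_ofReal_iff]
    · rw [lt_div_iff₀ hD_pos]
      simp only [hg] at hzg
      simp only [hD]
      linarith
    · positivity
  refine ⟨hmain, fun i => ?_⟩
  have hmem : ∀ s : Set ℝ, (0:ℝ) ∈ s → MeasurableSet s →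
      (1 / 2 : ℝ≥0∞) ≤ (ν z).map (fun μ => μ i) s := by
    intro s hs hms
    rw [Measure.map_apply (measurable_pi_apply i) hms]
    refine le_trans hmain.le (measure_mono ?_)
    intro x hx
    simp only [Set.mem_singleton_iff] at hx
    simp [hx, hs]
  exact ⟨hmem _ Set.self_mem_Iic measurableSet_Iic, hmem _ Set.self_mem_Ici measurableSet_Ici⟩
end

section
/- (Key inequality in the proof of Theorem 1) If π₀ ∈ (0,1) satisfies π₀ > c/(1+c), then there exists t > 0 such that for every z ∈ ℝ^m with ‖z‖₂ < t one has π₀ f(z) > (1−π₀) ∫_{ℝ^m} f(z−v)γ(v)dv; i.e., the posterior odds of {μ ≠ 0} against {μ = 0} at observation z are strictly less than 1. -/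
open MeasureTheory

/-- **Key inequality in the proof of Theorem 1.**
Let `f` be a continuous probability density on `ℝ^m`, maximized at the origin with
`f 0 > 0`, and let `γ` be a probability density. Set
`c = (∫ f(-v) γ(v) dv) / f 0`. If `π₀ ∈ (0,1)` satisfies `π₀ > c/(1+c)`, then there
exists `t > 0` such that for every `z` with `‖z‖₂ < t` one has
`π₀ f(z) > (1-π₀) ∫ f(z-v) γ(v) dv`, i.e. the posterior odds of `{μ ≠ 0}` against
`{μ = 0}` at observation `z` are strictly less than 1. -/
theorem key_inequality_thm1 (m : ℕ) (hm : 1 ≤ m)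
    (f γ : (Fin m → ℝ) → ℝ)
    (hf_cont : Continuous f)
    (hf_nonneg : ∀ x, 0 ≤ f x)
    (hf_int : ∫ x, f x = 1)
    (hf_max : ∀ x, f x ≤ f 0)
    (hf_pos : 0 < f 0)
    (hγ_meas : Measurable γ)
    (hγ_nonneg : ∀ x, 0 ≤ γ x)
    (hγ_int : ∫ x, γ x = 1)
    (π₀ : ℝ) (hπ₀ : 0 < π₀) (hπ₁ : π₀ < 1)
    (hπc : π₀ > ((∫ v, f (-v) * γ v) / f 0) / (1 + (∫ v, f (-v) * γ v) / f 0)) :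
    ∃ t > (0 : ℝ), ∀ z : Fin m → ℝ,
      Real.sqrt (∑ i, z i ^ 2) < t →
      π₀ * f z > (1 - π₀) * ∫ v, f (z - v) * γ v := by

  set J := ∫ v, f (-v) * γ v with hJ
  have hγ_integrable : Integrable γ := by
    by_contra h
    rw [integral_undef h] at hγ_int
    norm_num at hγ_int
  have hI_cont : Continuous fun z => ∫ v, f (z - v) * γ v := by
    apply continuous_of_dominated (bound := fun v => f 0 * γ v)
    · intro z
      exact ((hf_cont.comp (continuous_const.sub continuous_id)).measurable.mul
        hγ_meas).aestronglyMeasurable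
    · intro z
      filter_upwards with v
      rw [Real.norm_eq_abs, abs_of_nonneg (mul_nonneg (hf_nonneg _) (hγ_nonneg _))]
      exact mul_le_mul_of_nonneg_right (hf_max _) (hγ_nonneg _)
    · exact hγ_integrable.const_mul _
    · filter_upwards with v
      exact (hf_cont.comp (continuous_id.sub continuous_const)).mul continuous_const
  have hJnonneg : 0 ≤ J := integral_nonneg fun v => mul_nonneg (hf_nonneg _) (hγ_nonneg _)
  have hc : 0 ≤ J / f 0 := div_nonneg hJnonneg hf_pos.le
  have key0 : (1 - π₀) * J < π₀ * f 0 := by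
    have h1 : (0:ℝ) < 1 + J / f 0 := by linarith
    rw [gt_iff_lt, div_lt_iff₀ h1] at hπc
    have hJc : J = J / f 0 * f 0 := by field_simp
    nlinarith [hπc, hf_pos]
  have hg_cont : Continuous fun z => π₀ * f z - (1 - π₀) * ∫ v, f (z - v) * γ v :=
    (continuous_const.mul hf_cont).sub (continuous_const.mul hI_cont)
  have hg0 : (0:ℝ) < π₀ * f 0 - (1 - π₀) * ∫ v, f ((0:Fin m → ℝ) - v) * γ v := by
    have : (fun v => f ((0:Fin m → ℝ) - v) * γ v) = fun v => f (-v) * γ v := by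
      funext v; rw [zero_sub]
    rw [this, ← hJ]
    linarith
  have hev := (hg_cont.tendsto 0).eventually (eventually_gt_nhds hg0)
  rw [Metric.eventually_nhds_iff] at hev
  obtain ⟨ε, hε, hball⟩ := hev
  refine ⟨ε, hε, fun z hz => ?_⟩
  have hnorm : ‖z‖ ≤ Real.sqrt (∑ i, z i ^ 2) := by
    rw [pi_norm_le_iff_of_nonneg (Real.sqrt_nonneg _)]
    intro i
    rw [Real.norm_eq_abs, ← Real.sqrt_sq_eq_abs]
    exact Real.sqrt_le_sqrt
      (Finset.single_le_sum (fun j _ => sq_nonneg (z j)) (Finset.mem_univ i))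
  have hd : dist z 0 < ε := by
    rw [dist_zero_right]; exact lt_of_le_of_lt hnorm hz
  have := hball hd
  linarith
end

section
/- (Equation (2.15): posterior median of a spike-and-slab Gaussian mixture is a soft thresholding rule) Let 0 ≤ l < 1/2, m ∈ ℝ, s > 0, and let μ = l·δ₀ + (1−l)·N(m, s²) be the mixture on ℝ of a point mass at 0 with weight l and a Gaussian of mean m and variance s² with weight 1−l. Set Q = Φ⁻¹(1/(2(1−l))) and t* = sgn(m)·(|m| − s·Q)₊. Then t* is a median of μ, i.e., μ((−∞,t*]) ≥ 1/2 and μ([t*,∞)) ≥ 1/2; in particular t* = 0 if and only if |m| ≤ s·Q. -/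
/-!
Under the mixture, `P(X ≤ t) = l·1[0 ≤ t] + (1 - l) Φ((t - m)/s)`. Soft thresholding never lowers
`m` by more than `sQ`, and raises it by exactly `sQ` when the result is negative; since
`(1 - l) Φ(Q) = 1/2 = l + (1 - l) Φ(-Q)`, either way `P(X ≤ t*) ≥ 1/2`. The reflection
`x ↦ -x` carries the mixture for `m` to the one for `-m` and `t*(m)` to `t*(-m)`, which turns
the bound on `P(X ≤ t*)` into the bound on `P(X ≥ t*)`.
-/

open MeasureTheory ProbabilityTheory
open scoped ENNReal

/-- The standard normal cumulative distribution function `Φ`. -/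
noncomputable def stdNormalCDF (x : ℝ) : ℝ :=
  (gaussianReal 0 1 (Set.Iic x)).toReal

open Set

lemma stdNormalCDF_eq_cdf : stdNormalCDF = cdf (gaussianReal 0 1) := by
  funext x
  rw [cdf_eq_real]
  rfl

lemma stdNormalCDF_mono : Monotone stdNormalCDF :=
  stdNormalCDF_eq_cdf ▸ (cdf (gaussianReal 0 1)).mono

lemma stdNormalCDF_strictMono : StrictMono stdNormalCDF := by
  intro x y hxy
  have hIoc : gaussianReal 0 1 (Ioc x y) ≠ 0 := fun h =>
    hxy.not_ge (by simpa using gaussianReal_absolutelyContinuous' 0 one_ne_zero h)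
  rwa [← measure_cdf (gaussianReal 0 1), StieltjesFunction.measure_Ioc, ← stdNormalCDF_eq_cdf,
    ← pos_iff_ne_zero, ENNReal.ofReal_pos, sub_pos] at hIoc

lemma stdNormalCDF_neg (x : ℝ) : stdNormalCDF (-x) = 1 - stdNormalCDF x := by
  have := nullSingletonClass_gaussianReal (μ := 0) one_ne_zero
  have hreflect : gaussianReal 0 1 (Iic (-x)) = gaussianReal 0 1 (Iic x)ᶜ := by
    conv_lhs => rw [← neg_zero, ← gaussianReal_map_neg]
    rw [Measure.map_apply measurable_neg measurableSet_Iic, compl_Iic, measure_congr Ioi_ae_eq_Ici]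
    simp
  rw [stdNormalCDF, hreflect, prob_compl_eq_one_sub measurableSet_Iic,
    ENNReal.toReal_sub_of_le prob_le_one ENNReal.one_ne_top, ENNReal.toReal_one, stdNormalCDF]

lemma stdNormalCDF_zero : stdNormalCDF 0 = 1 / 2 := by
  linarith [neg_zero (G := ℝ) ▸ stdNormalCDF_neg 0]

lemma nonneg_of_half_le_stdNormalCDF {x : ℝ} (hx : 1 / 2 ≤ stdNormalCDF x) : 0 ≤ x := by
  by_contra! h
  linarith [stdNormalCDF_strictMono h, stdNormalCDF_zero]

lemma gaussianReal_Iic {s : ℝ} (hs : 0 < s) (m x : ℝ) :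
    gaussianReal m ⟨s ^ 2, sq_nonneg s⟩ (Iic x) = ENNReal.ofReal (stdNormalCDF ((x - m) / s)) := by
  have haffine :
      (gaussianReal 0 1).map ((· + m) ∘ (s * ·)) = gaussianReal m ⟨s ^ 2, sq_nonneg s⟩ := by
    rw [← Measure.map_map (by fun_prop) (by fun_prop), gaussianReal_map_const_mul,
      gaussianReal_map_add_const]
    congr 1
    · simp
    · exact mul_one _
  have hpre : (· + m) ∘ (s * ·) ⁻¹' Iic x = Iic ((x - m) / s) := by
    ext y
    simp [le_div_iff₀ hs, mul_comm, le_sub_iff_add_le]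
  rw [← haffine, Measure.map_apply (by fun_prop) measurableSet_Iic, hpre, stdNormalCDF,
    ENNReal.ofReal_toReal (measure_ne_top _ _)]

noncomputable def softThreshold (c m : ℝ) : ℝ := Real.sign m * max (|m| - c) 0

lemma softThreshold_neg (c m : ℝ) : softThreshold c (-m) = -softThreshold c m := by
  simp [softThreshold, Real.sign_neg]

lemma softThreshold_eq_zero_iff {c : ℝ} (hc : 0 ≤ c) (m : ℝ) :
    softThreshold c m = 0 ↔ |m| ≤ c := by
  rcases lt_trichotomy m 0 with hm | rfl | hm
  · simp [softThreshold, Real.sign_of_neg hm]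
  · simpa [softThreshold] using hc
  · simp [softThreshold, Real.sign_of_pos hm]

lemma neg_le_softThreshold_sub {c : ℝ} (hc : 0 ≤ c) (m : ℝ) : -c ≤ softThreshold c m - m := by
  rcases lt_trichotomy m 0 with hm | rfl | hm
  · simp only [softThreshold, Real.sign_of_neg hm, abs_of_neg hm]
    grind
  · simpa [softThreshold] using hc
  · simp only [softThreshold, Real.sign_of_pos hm, abs_of_pos hm]
    grind

lemma softThreshold_sub_self_of_neg {c m : ℝ} (h : softThreshold c m < 0) :
    softThreshold c m - m = c := by
  rcases lt_trichotomy m 0 with hm | rfl | hm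
  · simp only [softThreshold, Real.sign_of_neg hm, abs_of_neg hm] at h ⊢
    grind
  · simp [softThreshold] at h
  · simp only [softThreshold, Real.sign_of_pos hm, abs_of_pos hm] at h
    grind

noncomputable def spikeSlab (l m s : ℝ) : Measure ℝ :=
  ENNReal.ofReal l • Measure.dirac 0 + ENNReal.ofReal (1 - l) • gaussianReal m ⟨s ^ 2, sq_nonneg s⟩

lemma spikeSlab_Iic_of_nonneg {l s : ℝ} (hl0 : 0 ≤ l) (hl1 : l ≤ 1) (hs : 0 < s) (m : ℝ)
    {t : ℝ} (ht : 0 ≤ t) :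
    spikeSlab l m s (Iic t) = ENNReal.ofReal (l + (1 - l) * stdNormalCDF ((t - m) / s)) := by
  have hΦ := stdNormalCDF_eq_cdf ▸ cdf_nonneg (gaussianReal 0 1) ((t - m) / s)
  rw [ENNReal.ofReal_add hl0 (by positivity), ENNReal.ofReal_mul (by linarith),
    ← gaussianReal_Iic hs]
  simp [spikeSlab, ht]

lemma ofReal_le_spikeSlab_Iic {l s : ℝ} (hl1 : l ≤ 1) (hs : 0 < s) (m t : ℝ) :
    ENNReal.ofReal ((1 - l) * stdNormalCDF ((t - m) / s)) ≤ spikeSlab l m s (Iic t) := by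
  rw [ENNReal.ofReal_mul (by linarith), ← gaussianReal_Iic hs]
  simp [spikeSlab]

lemma spikeSlab_map_neg (l m s : ℝ) :
    (spikeSlab l m s).map (fun x => -x) = spikeSlab l (-m) s := by
  rw [spikeSlab, Measure.map_add _ _ measurable_neg, Measure.map_smul, Measure.map_smul,
    Measure.map_dirac' measurable_neg, neg_zero, spikeSlab]
  congr 2
  exact gaussianReal_map_neg

lemma spikeSlab_Ici (l m s t : ℝ) : spikeSlab l m s (Ici t) = spikeSlab l (-m) s (Iic (-t)) := by
  rw [← spikeSlab_map_neg, Measure.map_apply measurable_neg measurableSet_Iic]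
  simp

lemma half_le_ofReal {x : ℝ} (hx : 1 / 2 ≤ x) : (1 / 2 : ℝ≥0∞) ≤ ENNReal.ofReal x := by
  rw [ENNReal.le_ofReal_iff_toReal_le (by simp) (by linarith)]
  simpa using hx

lemma half_le_spikeSlab_Iic_softThreshold {l s Q : ℝ} (hl0 : 0 ≤ l) (hl1 : l < 1) (hs : 0 < s)
    (hQ : stdNormalCDF Q = 1 / (2 * (1 - l))) (hQ0 : 0 ≤ Q) (m : ℝ) :
    1 / 2 ≤ spikeSlab l m s (Iic (softThreshold (s * Q) m)) := by
  set t := softThreshold (s * Q) m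
  have hΦQ : (1 - l) * stdNormalCDF Q = 1 / 2 := by
    rw [hQ]
    field_simp [(sub_pos.2 hl1).ne']
  by_cases ht : 0 ≤ t
  · refine (half_le_ofReal ?_).trans (spikeSlab_Iic_of_nonneg hl0 hl1.le hs m ht).ge
    have hshift : -Q ≤ (t - m) / s := by
      rw [le_div_iff₀ hs]
      linarith [neg_le_softThreshold_sub (mul_nonneg hs.le hQ0) m]
    have hΦ := stdNormalCDF_mono hshift
    rw [stdNormalCDF_neg] at hΦ
    linarith [mul_le_mul_of_nonneg_left hΦ (sub_nonneg.2 hl1.le)]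
  · refine (half_le_ofReal ?_).trans (ofReal_le_spikeSlab_Iic hl1.le hs m t)
    rw [softThreshold_sub_self_of_neg (not_le.1 ht), mul_div_cancel_left₀ _ hs.ne']
    exact hΦQ.ge

/-- **Equation (2.15): the posterior median of a spike-and-slab Gaussian mixture is a
soft thresholding rule.**  Let `0 ≤ l < 1/2`, `m ∈ ℝ`, `s > 0`, and let
`μ = l δ₀ + (1-l) N(m, s²)`.  Let `Q = Φ⁻¹(1/(2(1-l)))`, i.e. the (unique) real with
`Φ Q = 1/(2(1-l))`, and set `t* = sgn(m) (|m| - s Q)₊`.  Then `t*` is a median of `μ`,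
and `t* = 0 ↔ |m| ≤ s Q`. -/
theorem spike_slab_posterior_median_soft_threshold
    (l m s Q : ℝ) (hl0 : 0 ≤ l) (hl : l < 1 / 2) (hs : 0 < s)
    (hQ : stdNormalCDF Q = 1 / (2 * (1 - l)))
    (μ : Measure ℝ)
    (hμ : μ = ENNReal.ofReal l • Measure.dirac (0 : ℝ) +
      ENNReal.ofReal (1 - l) • gaussianReal m ⟨s ^ 2, sq_nonneg s⟩)
    (tstar : ℝ)
    (htstar : tstar = Real.sign m * max (|m| - s * Q) 0) :
    μ (Set.Iic tstar) ≥ 1 / 2 ∧ μ (Set.Ici tstar) ≥ 1 / 2 ∧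
      (tstar = 0 ↔ |m| ≤ s * Q) := by
  have hl1 : l < 1 := by linarith
  have hQ0 : 0 ≤ Q := nonneg_of_half_le_stdNormalCDF <| by
    rw [hQ, div_le_div_iff₀ two_pos (by linarith)]
    linarith
  change μ = spikeSlab l m s at hμ
  change tstar = softThreshold (s * Q) m at htstar
  subst hμ htstar
  refine ⟨half_le_spikeSlab_Iic_softThreshold hl0 hl1 hs hQ hQ0 m, ?_,
    softThreshold_eq_zero_iff (mul_nonneg hs.le hQ0) m⟩
  rw [spikeSlab_Ici, ← softThreshold_neg]
  exact half_le_spikeSlab_Iic_softThreshold hl0 hl1 hs hQ hQ0 (-m)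
end

section
/- (Proximal operator of the Euclidean norm, underlying the group lasso soft-thresholding form) For every a ∈ ℝ^m and κ > 0, the strictly convex function F(β) = ½‖β − a‖₂² + κ‖β‖₂ has a unique global minimizer β*, given by β* = (1 − κ/‖a‖₂)₊ · a when a ≠ 0, and β* = 0 when a = 0. In particular β* = 0 if and only if ‖a‖₂ ≤ κ. -/
open Classical

local notation "⟪" x ", " y "⟫" => @inner ℝ _ _ x y

lemma combo_norm_sq {E : Type*} [NormedAddCommGroup E] [InnerProductSpace ℝ E]
    (u v : E) (t s : ℝ) (h : t + s = 1) :
    ‖t • u + s • v‖ ^ 2 = t * ‖u‖ ^ 2 + s * ‖v‖ ^ 2 - t * s * ‖u - v‖ ^ 2 := by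
  have h1 : ∀ w : E, ‖w‖ ^ 2 = ⟪w, w⟫ := fun w => (real_inner_self_eq_norm_sq w).symm
  rw [h1, h1, h1, h1]
  simp only [inner_add_add_self, inner_sub_sub_self, real_inner_smul_left,
    real_inner_smul_right]
  have : s = 1 - t := by linarith
  subst this; ring

/-- **Proximal operator of the Euclidean norm** (underlying the group-lasso
soft-thresholding form).  For every `a ∈ ℝ^m` and `κ > 0`, the strictly convex
function `F(β) = ½‖β - a‖₂² + κ‖β‖₂` has a unique global minimizer `β*`, given by
`β* = (1 - κ/‖a‖₂)₊ • a` when `a ≠ 0` and `β* = 0` when `a = 0`; in particular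
`β* = 0 ↔ ‖a‖₂ ≤ κ`. -/
theorem prox_euclidean_norm (m : ℕ)
    (a : EuclideanSpace ℝ (Fin m)) (κ : ℝ) (hκ : 0 < κ)
    (F : EuclideanSpace ℝ (Fin m) → ℝ)
    (hF : ∀ β, F β = 1 / 2 * ‖β - a‖ ^ 2 + κ * ‖β‖)
    (βstar : EuclideanSpace ℝ (Fin m))
    (hβstar : βstar = if a = 0 then 0 else max (1 - κ / ‖a‖) 0 • a) :
    StrictConvexOn ℝ Set.univ F ∧
      (∀ β, β ≠ βstar → F βstar < F β) ∧
      (βstar = 0 ↔ ‖a‖ ≤ κ) := by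
  have expand : ∀ β : EuclideanSpace ℝ (Fin m),
      ‖β - a‖ ^ 2 = ‖β‖ ^ 2 - 2 * ⟪β, a⟫ + ‖a‖ ^ 2 := fun β => by
    rw [@norm_sub_sq_real]
  -- strict convexity
  have hsc : StrictConvexOn ℝ Set.univ F := by
    refine ⟨convex_univ, fun x _ y _ hxy t s ht hs hts => ?_⟩
    simp only [hF]
    have hx : t • x + s • y - a = t • (x - a) + s • (y - a) := by
      have h := hts
      have e : t • (x - a) + s • (y - a) = t • x + s • y - (t + s) • a := by module
      rw [e, hts, one_smul]
    have h1 : ‖t • x + s • y - a‖ ^ 2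
        = t * ‖x - a‖ ^ 2 + s * ‖y - a‖ ^ 2 - t * s * ‖x - y‖ ^ 2 := by
      rw [hx, combo_norm_sq _ _ _ _ hts]
      congr 2
      abel
    have h2 : ‖t • x + s • y‖ ≤ t * ‖x‖ + s * ‖y‖ := by
      calc ‖t • x + s • y‖ ≤ ‖t • x‖ + ‖s • y‖ := norm_add_le _ _
        _ = t * ‖x‖ + s * ‖y‖ := by
            rw [norm_smul, norm_smul, Real.norm_eq_abs, Real.norm_eq_abs,
              abs_of_pos ht, abs_of_pos hs]
    have h3 : 0 < ‖x - y‖ ^ 2 := pow_pos (norm_pos_iff.2 (sub_ne_zero.2 hxy)) 2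
    simp only [smul_eq_mul]
    nlinarith [mul_pos (mul_pos ht hs) h3, mul_le_mul_of_nonneg_left h2 hκ.le]
  refine ⟨hsc, ?_⟩
  by_cases hle : ‖a‖ ≤ κ
  · -- βstar = 0
    have hb0 : βstar = 0 := by
      rw [hβstar]
      split_ifs with h0
      · rfl
      · have hr : 0 < ‖a‖ := norm_pos_iff.2 h0
        have : 1 - κ / ‖a‖ ≤ 0 := by
          have : 1 ≤ κ / ‖a‖ := (one_le_div hr).2 hle
          linarith
        rw [max_eq_right this, zero_smul]
    subst hb0
    refine ⟨fun β hne => ?_, by simpa using hle⟩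
    have hβ : 0 < ‖β‖ := norm_pos_iff.2 hne
    have hip : ⟪β, a⟫ ≤ ‖β‖ * ‖a‖ := real_inner_le_norm β a
    rw [hF, hF, expand, expand]
    simp only [norm_zero, inner_zero_left]
    nlinarith [mul_nonneg hβ.le (sub_nonneg.2 hle), sq_nonneg ‖β‖]
  · push_neg at hle
    have hr : 0 < ‖a‖ := lt_trans hκ hle
    have ha0 : a ≠ 0 := norm_pos_iff.1 hr
    obtain ⟨c, hc⟩ : ∃ c : ℝ, c = 1 - κ / ‖a‖ := ⟨_, rfl⟩
    have hc0 : 0 < c := by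
      have h2 : κ / ‖a‖ < 1 := (div_lt_one hr).2 hle
      rw [hc]; linarith
    have hcr : c * ‖a‖ = ‖a‖ - κ := by rw [hc]; field_simp
    have hbs : βstar = c • a := by
      rw [hβstar, if_neg ha0, ← hc, max_eq_left hc0.le]
    refine ⟨fun β hne => ?_, ?_⟩
    · rw [hbs] at hne
      have hpos : 0 < ‖β - c • a‖ ^ 2 := pow_pos (norm_pos_iff.2 (sub_ne_zero.2 hne)) 2
      have hexp : ‖β - c • a‖ ^ 2 = ‖β‖ ^ 2 - 2 * (c * ⟪β, a⟫) + c ^ 2 * ‖a‖ ^ 2 := by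
        rw [@norm_sub_sq_real, real_inner_smul_right, norm_smul, Real.norm_eq_abs,
          abs_of_pos hc0]
        ring
      rw [hexp] at hpos
      have hip : ⟪β, a⟫ ≤ ‖β‖ * ‖a‖ := real_inner_le_norm β a
      have h1c : 0 ≤ 1 - c := by
        have : 0 < κ / ‖a‖ := div_pos hκ hr
        simp only [hc]; linarith
      rw [hF, hF, expand, expand, hbs]
      have e1 : ‖c • a‖ = c * ‖a‖ := by
        rw [norm_smul, Real.norm_eq_abs, abs_of_pos hc0]
      have e2 : ⟪c • a, a⟫ = c * ‖a‖ ^ 2 := by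
        rw [real_inner_smul_left, real_inner_self_eq_norm_sq]
      rw [e1, e2]
      have hk : κ = (1 - c) * ‖a‖ := by linarith [hcr]
      rw [hk]
      nlinarith [hpos, mul_nonneg h1c (sub_nonneg.2 hip)]
    · rw [hbs]
      constructor
      · intro h
        exact absurd h (smul_ne_zero hc0.ne' ha0)
      · intro h; linarith
end

section
/- (Lemma 1: model selection inconsistency of the group lasso) Suppose there exists at least one group g₀ with β⁰_{g₀} = 0, and the tuning parameters satisfy λ_n/√n → λ₀ for some λ₀ ∈ [0,∞). Then limsup_{n→∞} μ_n({x ∈ ℝ^p : 𝒜_n^GL(x) = 𝒜}) < 1; i.e., the group lasso with such tuning fails to be model-selection consistent. -/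
open MeasureTheory ProbabilityTheory Filter Classical
open scoped ENNReal

lemma pi_marginal {p : ℕ} (ms : Fin p → Measure ℝ) [∀ i, IsProbabilityMeasure (ms i)]
    (i₀ : Fin p) (A : Set ℝ) :
    Measure.pi ms {x | x i₀ ∈ A} = ms i₀ A := by
  have hset : {x : Fin p → ℝ | x i₀ ∈ A} =
      Set.pi Set.univ (fun i => if i = i₀ then A else Set.univ) := by
    ext x
    simp only [Set.mem_setOf_eq, Set.mem_pi, Set.mem_univ, forall_true_left]
    constructor
    · intro h i; by_cases hi : i = i₀ <;> simp [hi, h]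
    · intro h; have := h i₀; simpa using this
  rw [hset, Measure.pi_pi]
  rw [Finset.prod_eq_single i₀ (fun j _ hj => by simp [hj]) (by simp)]
  simp

lemma gauss_scale (v : ℝ) (hv : 0 < v) (c : ℝ) :
    gaussianReal 0 (Real.toNNReal v) {y | |y| ≤ c} =
      gaussianReal 0 1 {y | |Real.sqrt v * y| ≤ c} := by
  have hs : (0:ℝ) < Real.sqrt v := Real.sqrt_pos.mpr hv
  have hmap : (gaussianReal 0 1).map (fun y => Real.sqrt v * y) =
      gaussianReal 0 (Real.toNNReal v) := by
    rw [gaussianReal_map_const_mul (Real.sqrt v)]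
    congr 1
    · ring
    · ext
      simp [Real.sq_sqrt hv.le, Real.coe_toNNReal _ hv.le]
  rw [← hmap, Measure.map_apply (measurable_const_mul _)
    ((isClosed_le continuous_abs continuous_const).measurableSet)]
  rfl

lemma gauss_ball_lt_one (t : ℝ) :
    gaussianReal 0 1 {y | |y| ≤ t} < 1 := by
  set g := gaussianReal 0 1 with hg
  have hprob : IsProbabilityMeasure g := by rw [hg]; infer_instance
  have hε : g (Set.Ioi t) ≠ 0 := by
    intro h
    have := (gaussianReal_absolutelyContinuous' 0 (v := 1) one_ne_zero) h
    simp [Real.volume_Ioi] at this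
  have hdisj : Disjoint {y : ℝ | |y| ≤ t} (Set.Ioi t) := by
    rw [Set.disjoint_left]
    intro y hy hy'
    have h1 : |y| ≤ t := hy
    have h2 : t < y := hy'
    have := lt_of_lt_of_le h2 (le_abs_self y)
    linarith
  have hsum : g {y | |y| ≤ t} + g (Set.Ioi t) ≤ 1 := by
    rw [← measure_union hdisj measurableSet_Ioi]
    exact prob_le_one
  have hne : g {y | |y| ≤ t} ≠ ⊤ := (measure_lt_top g _).ne
  calc g {y | |y| ≤ t} < g {y | |y| ≤ t} + g (Set.Ioi t) :=
        ENNReal.lt_add_right hne hε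
    _ ≤ 1 := hsum

/-- **Lemma 1: model-selection inconsistency of the group lasso.**
Orthogonal design with Gaussian errors: the least squares estimator has law
`μ_n = ⊗_{i=1}^p N(β⁰_i, σ²/n)`.  Coordinates are partitioned into (nonempty)
groups by `gr : Fin p → Fin G`; the group lasso estimator is
`β̂_{n,g}^GL = (1 - λ_n/(n‖β̂_{n,g}^LS‖₂))₊ β̂_{n,g}^LS` (zero when `β̂_{n,g}^LS = 0`),
the selected model is `𝒜_n^GL(x) = {g : β̂_{n,g}^GL(x) ≠ 0}` and the true model
is `𝒜 = {g : β⁰_g ≠ 0}`.  If some group is truly null and `λ_n/√n → λ₀ ∈ [0,∞)`,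
then `limsup_n μ_n(𝒜_n^GL = 𝒜) < 1`. -/
theorem group_lasso_selection_inconsistent
    (p G : ℕ) (gr : Fin p → Fin G) (hgr : Function.Surjective gr)
    (β0 : Fin p → ℝ) (σ : ℝ) (hσ : 0 < σ)
    (μ : ℕ → Measure (Fin p → ℝ))
    (hμ : ∀ n, μ n =
      Measure.pi (fun i : Fin p => gaussianReal (β0 i) (Real.toNNReal (σ ^ 2 / n))))
    (lam : ℕ → ℝ) (hlam : ∀ n, 0 < lam n)
    (lam0 : ℝ) (hlam0 : 0 ≤ lam0)
    (hlim : Tendsto (fun n => lam n / Real.sqrt n) atTop (nhds lam0))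
    (bnorm : Fin G → (Fin p → ℝ) → ℝ)
    (hbnorm : ∀ g x, bnorm g x =
      Real.sqrt (∑ i ∈ Finset.univ.filter (fun i => gr i = g), x i ^ 2))
    (glEst : ℕ → (Fin p → ℝ) → (Fin p → ℝ))
    (hGL : ∀ n x i, glEst n x i =
      if bnorm (gr i) x = 0 then 0
      else max (1 - lam n / ((n : ℝ) * bnorm (gr i) x)) 0 * x i)
    (hnull : ∃ g₀ : Fin G, ∀ i, gr i = g₀ → β0 i = 0) :
    limsup (fun n => μ n
        {x | {g : Fin G | ∃ i, gr i = g ∧ glEst n x i ≠ 0} =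
             {g : Fin G | ∃ i, gr i = g ∧ β0 i ≠ 0}}) atTop < 1 := by
  obtain ⟨g₀, hg₀⟩ := hnull
  obtain ⟨i₀, hi₀⟩ := hgr g₀
  set t' : ℝ := lam0 / σ + 1 with ht'def
  set q : ℝ≥0∞ := gaussianReal 0 1 {y | |y| ≤ t'} with hqdef
  have hev : ∀ᶠ n in atTop, μ n
      {x | {g : Fin G | ∃ i, gr i = g ∧ glEst n x i ≠ 0} =
           {g : Fin G | ∃ i, gr i = g ∧ β0 i ≠ 0}} ≤ q := by
    have h1 : ∀ᶠ n in atTop, lam n / Real.sqrt n ≤ lam0 + σ :=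
      hlim.eventually_le_const (by linarith)
    filter_upwards [h1, eventually_ge_atTop 1] with n hn hn1
    have npos : (0:ℝ) < n := by exact_mod_cast hn1
    have sqpos : (0:ℝ) < Real.sqrt n := Real.sqrt_pos.mpr npos
    have hsq : Real.sqrt n * Real.sqrt n = (n:ℝ) := Real.mul_self_sqrt npos.le
    set c : ℝ := lam n / n with hcdef
    have hcpos : 0 < c := div_pos (hlam n) npos
    -- Step A : inclusion of the event
    have hsub : {x : Fin p → ℝ |
        {g : Fin G | ∃ i, gr i = g ∧ glEst n x i ≠ 0} =
        {g : Fin G | ∃ i, gr i = g ∧ β0 i ≠ 0}} ⊆ {x | x i₀ ∈ {y : ℝ | |y| ≤ c}} := by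
      intro x hx
      have hx' : {g : Fin G | ∃ i, gr i = g ∧ glEst n x i ≠ 0} =
          {g : Fin G | ∃ i, gr i = g ∧ β0 i ≠ 0} := hx
      have hRHS : g₀ ∉ {g : Fin G | ∃ i, gr i = g ∧ β0 i ≠ 0} := by
        rintro ⟨i, hi, hne⟩; exact hne (hg₀ i hi)
      have hLHS : ∀ i, gr i = g₀ → glEst n x i = 0 := by
        intro i hi
        by_contra h
        exact hRHS (hx' ▸ ⟨i, hi, h⟩)
      set S := Finset.univ.filter (fun i => gr i = g₀) with hS
      have hi₀S : i₀ ∈ S := by simp [hS, hi₀]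
      have hb := hbnorm g₀ x
      show |x i₀| ≤ c
      by_cases hb0 : bnorm g₀ x = 0
      · have hsum : ∑ i ∈ S, x i ^ 2 = 0 := by
          have h0 : Real.sqrt (∑ i ∈ S, x i ^ 2) = 0 := by rw [← hb]; exact hb0
          have hnn : 0 ≤ ∑ i ∈ S, x i ^ 2 :=
            Finset.sum_nonneg fun i _ => sq_nonneg _
          nlinarith [Real.sq_sqrt hnn, h0]
        have hx0 : x i₀ = 0 := by
          have := (Finset.sum_eq_zero_iff_of_nonneg
            (fun i _ => sq_nonneg (x i))).mp hsum i₀ hi₀S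
          nlinarith
        rw [hx0]; simpa using hcpos.le
      · have hbpos : 0 < bnorm g₀ x :=
          lt_of_le_of_ne (hb ▸ Real.sqrt_nonneg _) (Ne.symm hb0)
        obtain ⟨j, hjS, hj⟩ : ∃ j ∈ S, x j ≠ 0 := by
          by_contra h
          push_neg at h
          apply hb0
          rw [hb, Finset.sum_eq_zero (fun i hi => by rw [h i hi]; ring), Real.sqrt_zero]
        have hjg : gr j = g₀ := by simpa [hS] using hjS
        have h0 := hLHS j hjg
        rw [hGL, hjg, if_neg hb0] at h0
        have hmax : max (1 - lam n / ((n:ℝ) * bnorm g₀ x)) 0 = 0 := by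
          rcases mul_eq_zero.mp h0 with h | h
          · exact h
          · exact absurd h hj
        have h1' : 1 - lam n / ((n:ℝ) * bnorm g₀ x) ≤ 0 := max_eq_right_iff.mp hmax
        have hnbpos : 0 < (n:ℝ) * bnorm g₀ x := by positivity
        have hnb : (n:ℝ) * bnorm g₀ x ≤ lam n := by
          rw [sub_nonpos] at h1'
          have := (le_div_iff₀ hnbpos).mp h1'
          linarith
        have hxb : |x i₀| ≤ bnorm g₀ x := by
          rw [hb, ← Real.sqrt_sq_eq_abs]
          exact Real.sqrt_le_sqrt
            (Finset.single_le_sum (fun i _ => sq_nonneg (x i)) hi₀S)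
        have hbc : bnorm g₀ x ≤ c := by
          rw [hcdef, le_div_iff₀ npos]
          linarith
        linarith
    -- Step B : bound the measure
    have hv : (0:ℝ) < σ ^ 2 / n := by positivity
    have hβ : β0 i₀ = 0 := hg₀ i₀ hi₀
    calc μ n _ ≤ μ n {x | x i₀ ∈ {y : ℝ | |y| ≤ c}} := measure_mono hsub
      _ = gaussianReal (β0 i₀) (Real.toNNReal (σ ^ 2 / n)) {y | |y| ≤ c} := by
          rw [hμ n]; exact pi_marginal _ i₀ _
      _ = gaussianReal 0 1 {y | |Real.sqrt (σ ^ 2 / n) * y| ≤ c} := by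
          rw [hβ, gauss_scale _ hv]
      _ ≤ q := by
          apply measure_mono
          intro y hy
          have hy' : |Real.sqrt (σ ^ 2 / n) * y| ≤ c := hy
          have hsv : Real.sqrt (σ ^ 2 / n) = σ / Real.sqrt n := by
            rw [Real.sqrt_div (sq_nonneg σ), Real.sqrt_sq hσ.le]
          have hspos : 0 < Real.sqrt (σ ^ 2 / n) := Real.sqrt_pos.mpr hv
          rw [abs_mul, abs_of_pos hspos] at hy'
          show |y| ≤ t'
          have hct : c ≤ t' * Real.sqrt (σ ^ 2 / n) := by
            rw [hsv, ht'def, hcdef]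
            have h2 : lam n ≤ (lam0 + σ) * Real.sqrt n := (div_le_iff₀ sqpos).mp hn
            rw [div_le_iff₀ npos] at *
            have he : (lam0 / σ + 1) * (σ / Real.sqrt n) * n
                = (lam0 + σ) * Real.sqrt n := by
              field_simp
              nlinarith [hsq]
            rw [he]
            exact h2
          have := hy'.trans hct
          calc |y| = Real.sqrt (σ ^ 2 / n) * |y| / Real.sqrt (σ ^ 2 / n) := by
                field_simp
            _ ≤ t' * Real.sqrt (σ ^ 2 / n) / Real.sqrt (σ ^ 2 / n) := by
                gcongr
            _ = t' := by field_simp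
  calc limsup (fun n => μ n
        {x | {g : Fin G | ∃ i, gr i = g ∧ glEst n x i ≠ 0} =
             {g : Fin G | ∃ i, gr i = g ∧ β0 i ≠ 0}}) atTop
      ≤ limsup (fun _ => q) atTop := limsup_le_limsup hev
    _ = q := limsup_const q
    _ < 1 := gauss_ball_lt_one t'
end

section
/- (Lemma 2: suboptimal estimation rate of the group lasso) Suppose β⁰_g ≠ 0 for every group g, λ_n/√n → ∞, and λ_n/n → 0. Then (n/λ_n)(β̂_n^GL − β⁰) converges in probability under μ_n to the constant vector C ∈ ℝ^p whose g-th block is −β⁰_g/‖β⁰_g‖₂: for every ε > 0, μ_n({x : ‖(n/λ_n)(β̂_n^GL(x) − β⁰) − C‖₂ > ε}) → 0 as n → ∞. In particular the group lasso converges at rate n/λ_n, which is slower than √n. -/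
open MeasureTheory ProbabilityTheory Filter Classical
open scoped ENNReal NNReal Topology

/-! Write `x = β⁰ + t u` with `t = λ_n / n`, so that `u = (n / λ_n)(x - β⁰)`. As soon as
`t < ‖x_g‖` for every group, the rescaled group lasso error equals
`u - x_g / ‖x_g‖ + β⁰_g / ‖β⁰_g‖`, a function of `(t, u)` that is continuous at `(0, 0)` and
vanishes there because every `‖β⁰_g‖` is positive. Under `μ_n` the coordinates of `u` have
variance `σ² n / λ_n² → 0`, so by Chebyshev `u → 0` in probability, while `t → 0`. -/

section GroupLasso

variable {ι κ : Type*} [Fintype ι] [DecidableEq κ] (gr : ι → κ)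

noncomputable def groupNorm (g : κ) (x : ι → ℝ) : ℝ :=
  √(∑ i ∈ Finset.univ.filter (fun i => gr i = g), x i ^ 2)

noncomputable def groupShrink (t : ℝ) (x : ι → ℝ) (i : ι) : ℝ :=
  if groupNorm gr (gr i) x = 0 then 0 else max (1 - t / groupNorm gr (gr i) x) 0 * x i

noncomputable def groupDir (x : ι → ℝ) (i : ι) : ℝ :=
  x i / groupNorm gr (gr i) x

variable {gr}

lemma groupNorm_pos {g : κ} {x : ι → ℝ} (h : ∃ i, gr i = g ∧ x i ≠ 0) :
    0 < groupNorm gr g x := by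
  obtain ⟨i, hi, hx⟩ := h
  exact Real.sqrt_pos.2 <| Finset.sum_pos' (fun j _ => sq_nonneg _)
    ⟨i, Finset.mem_filter.2 ⟨Finset.mem_univ i, hi⟩, by positivity⟩

lemma continuous_groupNorm (g : κ) : Continuous (groupNorm gr g) := by
  unfold groupNorm; fun_prop

lemma continuousAt_groupDir {x : ι → ℝ} (hx : ∀ g, groupNorm gr g x ≠ 0) :
    ContinuousAt (groupDir gr) x :=
  continuousAt_pi.2 fun i =>
    (continuous_apply i).continuousAt.div (continuous_groupNorm _).continuousAt (hx _)

lemma groupShrink_of_lt {t : ℝ} {x : ι → ℝ} {i : ι} (ht : 0 ≤ t)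
    (h : t < groupNorm gr (gr i) x) :
    groupShrink gr t x i = x i - t * groupDir gr x i := by
  have hpos := ht.trans_lt h
  rw [groupShrink, if_neg hpos.ne', max_eq_left (sub_nonneg.2 ((div_le_one hpos).2 h.le)),
    groupDir]
  ring

lemma exists_rescaled_groupShrink_error_lt {β : ι → ℝ} (hβ : ∀ g, 0 < groupNorm gr g β)
    {ε : ℝ} (hε : 0 < ε) :
    ∃ δ > 0, ∀ t, 0 < t → t < δ → ∀ x : ι → ℝ, (∀ i, |x i - β i| < δ * t) →
      √(∑ i, (t⁻¹ * (groupShrink gr t x i - β i) + groupDir gr β i) ^ 2) < ε := by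
  set Φ : ℝ × (ι → ℝ) → ℝ := fun q =>
    √(∑ i, (q.2 i - groupDir gr (β + q.1 • q.2) i + groupDir gr β i) ^ 2)
  have hpath : Continuous fun q : ℝ × (ι → ℝ) => β + q.1 • q.2 := by fun_prop
  have hΦ : ContinuousAt Φ 0 := by
    have hdir : ContinuousAt (fun q : ℝ × (ι → ℝ) => groupDir gr (β + q.1 • q.2)) 0 :=
      (continuousAt_groupDir fun g => (hβ g).ne').comp_of_eq hpath.continuousAt (by simp)
    refine Real.continuous_sqrt.continuousAt.comp (tendsto_finsetSum _ fun i _ => ?_)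
    exact (((continuous_apply i).comp continuous_snd).continuousAt.sub
      ((continuous_apply i).continuousAt.comp hdir) |>.add continuousAt_const).pow 2
  have hV : ∀ᶠ q in 𝓝 (0 : ℝ × (ι → ℝ)),
      Φ q < ε ∧ ∀ i, q.1 < groupNorm gr (gr i) (β + q.1 • q.2) := by
    refine (hΦ.eventually (gt_mem_nhds (by simpa [Φ] using hε))).and
      (eventually_all.2 fun i => ?_)
    exact continuous_fst.continuousAt.eventually_lt
      ((continuous_groupNorm (gr i)).comp hpath).continuousAt (by simpa using hβ (gr i))
  obtain ⟨δ, hδ, hball⟩ := Metric.eventually_nhds_iff_ball.1 hV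
  refine ⟨δ, hδ, fun t ht htδ x hx => ?_⟩
  set u : ι → ℝ := fun i => t⁻¹ * (x i - β i)
  have hx_eq : β + t • u = x := funext fun i => by
    simp only [u, Pi.add_apply, Pi.smul_apply, smul_eq_mul, mul_inv_cancel_left₀ ht.ne',
      add_sub_cancel]
  have hu : ∀ i, ‖u i‖ < δ := fun i => by
    rw [Real.norm_eq_abs, abs_mul, abs_inv, abs_of_pos ht, inv_mul_lt_iff₀ ht, mul_comm]
    exact hx i
  obtain ⟨hΦlt, hnorm⟩ := hball (t, u) (by
    rw [Metric.mem_ball, dist_zero_right, Prod.norm_def, max_lt_iff, pi_norm_lt_iff hδ,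
      Real.norm_eq_abs, abs_of_pos ht]
    exact ⟨htδ, hu⟩)
  simp only [Φ, hx_eq] at hΦlt hnorm
  convert hΦlt using 5 with i
  rw [groupShrink_of_lt ht.le (hnorm i), ← hx_eq]
  simp only [u, Pi.add_apply, Pi.smul_apply, smul_eq_mul]
  field_simp
  ring

end GroupLasso

lemma gaussianReal_abs_sub_ge_le (m : ℝ) (v : ℝ≥0) {c : ℝ} (hc : 0 < c) :
    gaussianReal m v {y | c ≤ |y - m|} ≤ ENNReal.ofReal (v / c ^ 2) := by
  simpa [integral_id_gaussianReal, variance_id_gaussianReal] using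
    meas_ge_le_variance_div_sq (memLp_id_gaussianReal (μ := m) (v := v) 2) hc

lemma measure_pi_exists_abs_sub_ge_le {ι : Type*} [Fintype ι] (ν : ι → Measure ℝ)
    [∀ i, IsProbabilityMeasure (ν i)] (m : ι → ℝ) (c : ℝ) :
    Measure.pi ν {x | ∃ i, c ≤ |x i - m i|} ≤ ∑ i, ν i {y | c ≤ |y - m i|} := by
  rw [Set.ofPred_exists]
  refine (measure_iUnion_fintype_le _ _).trans_eq (Finset.sum_congr rfl fun i _ => ?_)
  exact (measurePreserving_eval ν i).measure_preimage
    (measurableSet_le measurable_const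
      (by fun_prop : Measurable fun y : ℝ => |y - m i|)).nullMeasurableSet

lemma tendsto_sq_div_sq_of_tendsto_div_sqrt_atTop (σ δ : ℝ) {a : ℕ → ℝ}
    (ha : Tendsto (fun n => a n / √n) atTop atTop) :
    Tendsto (fun n : ℕ => σ ^ 2 / n / (δ * (a n / n)) ^ 2) atTop (𝓝 0) := by
  have hlim : Tendsto (fun n => (σ / δ) ^ 2 * ((a n / √n)⁻¹) ^ 2) atTop (𝓝 0) := by
    simpa using (ha.inv_tendsto_atTop.pow 2).const_mul ((σ / δ) ^ 2)
  refine hlim.congr' ?_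
  filter_upwards [eventually_gt_atTop 0] with n hn
  have hs : √(n : ℝ) ≠ 0 := by positivity
  have hsq : (n : ℝ) = √n ^ 2 := (Real.sq_sqrt n.cast_nonneg).symm
  set s := √(n : ℝ)
  rw [hsq]
  field_simp

lemma tendsto_measure_pi_gaussianReal_exists_abs_sub_ge {ι : Type*} [Fintype ι] (m : ι → ℝ)
    {v : ℕ → ℝ≥0} {c : ℕ → ℝ} (hc : ∀ᶠ n in atTop, 0 < c n)
    (hvc : Tendsto (fun n => (v n : ℝ) / c n ^ 2) atTop (𝓝 0)) :
    Tendsto (fun n => Measure.pi (fun i => gaussianReal (m i) (v n))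
      {x | ∃ i, c n ≤ |x i - m i|}) atTop (𝓝 0) := by
  have hbound : Tendsto (fun n => ∑ _i : ι, ENNReal.ofReal (v n / c n ^ 2)) atTop (𝓝 0) := by
    simpa using tendsto_finsetSum Finset.univ fun _ _ => ENNReal.tendsto_ofReal hvc
  refine tendsto_of_tendsto_of_tendsto_of_le_of_le' tendsto_const_nhds hbound
    (.of_forall fun _ => zero_le) ?_
  filter_upwards [hc] with n hcn
  exact (measure_pi_exists_abs_sub_ge_le _ m _).trans
    (Finset.sum_le_sum fun i _ => gaussianReal_abs_sub_ge_le (m i) (v n) hcn)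

lemma eventually_pos_of_tendsto_div_sqrt_atTop {a : ℕ → ℝ}
    (ha : Tendsto (fun n => a n / √n) atTop atTop) : ∀ᶠ n in atTop, 0 < a n := by
  filter_upwards [ha.eventually_gt_atTop 0] with n hn
  exact (div_pos_iff.1 hn).elim And.left fun h => absurd h.2 (Real.sqrt_nonneg _).not_gt

theorem group_lasso_suboptimal_rate_general
    (p G : ℕ) (gr : Fin p → Fin G)
    (β0 : Fin p → ℝ) (σ : ℝ)
    (μ : ℕ → Measure (Fin p → ℝ))
    (hμ : ∀ n, μ n =
      Measure.pi (fun i : Fin p => gaussianReal (β0 i) (Real.toNNReal (σ ^ 2 / n))))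
    (lam : ℕ → ℝ)
    (hlim1 : Tendsto (fun n => lam n / Real.sqrt n) atTop atTop)
    (hlim2 : Tendsto (fun n => lam n / n) atTop (nhds 0))
    (bnorm : Fin G → (Fin p → ℝ) → ℝ)
    (hbnorm : ∀ g x, bnorm g x =
      Real.sqrt (∑ i ∈ Finset.univ.filter (fun i => gr i = g), x i ^ 2))
    (glEst : ℕ → (Fin p → ℝ) → (Fin p → ℝ))
    (hglEst : ∀ n x i, glEst n x i =
      if bnorm (gr i) x = 0 then 0
      else max (1 - lam n / ((n : ℝ) * bnorm (gr i) x)) 0 * x i)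
    (hactive : ∀ g : Fin G, ∃ i, gr i = g ∧ β0 i ≠ 0)
    (C : Fin p → ℝ) (hC : ∀ i, C i = -(β0 i) / bnorm (gr i) β0) :
    ∀ ε > (0 : ℝ),
      Tendsto (fun n => μ n
          {x | Real.sqrt (∑ i, ((n : ℝ) / lam n * (glEst n x i - β0 i) - C i) ^ 2) > ε})
        atTop (nhds 0) := by
  obtain rfl : bnorm = groupNorm gr := funext₂ hbnorm
  have hgl : ∀ n x i, glEst n x i = groupShrink gr (lam n / n) x i := fun n x i => by
    rw [hglEst, groupShrink, div_div]
  have hC' : ∀ i, C i = -groupDir gr β0 i := fun i => (hC i).trans (neg_div _ _)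
  intro ε hε
  obtain ⟨δ, hδ, hclose⟩ :=
    exists_rescaled_groupShrink_error_lt (fun g => groupNorm_pos (hactive g)) hε
  have hlam := eventually_pos_of_tendsto_div_sqrt_atTop hlim1
  have htail := tendsto_measure_pi_gaussianReal_exists_abs_sub_ge β0
    (v := fun n => Real.toNNReal (σ ^ 2 / n)) (c := fun n => δ * (lam n / n))
    (by filter_upwards [hlam, eventually_gt_atTop 0] with n hlamn hn; positivity)
    ((tendsto_sq_div_sq_of_tendsto_div_sqrt_atTop σ δ hlim1).congr fun n => by
      rw [Real.coe_toNNReal _ (by positivity)])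
  refine tendsto_of_tendsto_of_tendsto_of_le_of_le' tendsto_const_nhds htail
    (.of_forall fun _ => zero_le) ?_
  filter_upwards [hlam, eventually_gt_atTop 0, hlim2.eventually (gt_mem_nhds hδ)]
    with n hlamn hn hsmall
  rw [hμ n]
  refine measure_mono fun x hx => ?_
  rw [Set.mem_ofPred_eq]
  by_contra! hnear
  refine (hclose (lam n / n) (by positivity) hsmall x hnear).not_gt ?_
  simpa only [Set.mem_ofPred_eq, hgl, hC', inv_div, sub_neg_eq_add] using hx

/-- **Lemma 2: suboptimal estimation rate of the group lasso.**
Orthogonal design with Gaussian errors: the least squares estimator has law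
`μ_n = ⊗_{i=1}^p N(β⁰_i, σ²/n)`; coordinates are partitioned into (nonempty)
groups by `gr : Fin p → Fin G`, and the group lasso estimator is
`β̂_{n,g}^GL = (1 - λ_n/(n‖β̂_{n,g}^LS‖₂))₊ β̂_{n,g}^LS` (zero when `β̂_{n,g}^LS = 0`).
If every true group coefficient block is nonzero, `λ_n/√n → ∞` and `λ_n/n → 0`,
then `(n/λ_n)(β̂_n^GL - β⁰)` converges in probability under `μ_n` to the vector `C`
whose `g`-th block is `-β⁰_g/‖β⁰_g‖₂`. -/
theorem group_lasso_suboptimal_rate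
    (p G : ℕ) (gr : Fin p → Fin G) (hgr : Function.Surjective gr)
    (β0 : Fin p → ℝ) (σ : ℝ) (hσ : 0 < σ)
    (μ : ℕ → Measure (Fin p → ℝ))
    (hμ : ∀ n, μ n =
      Measure.pi (fun i : Fin p => gaussianReal (β0 i) (Real.toNNReal (σ ^ 2 / n))))
    (lam : ℕ → ℝ) (hlam : ∀ n, 0 < lam n)
    (hlim1 : Tendsto (fun n => lam n / Real.sqrt n) atTop atTop)
    (hlim2 : Tendsto (fun n => lam n / n) atTop (nhds 0))
    (bnorm : Fin G → (Fin p → ℝ) → ℝ)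
    (hbnorm : ∀ g x, bnorm g x =
      Real.sqrt (∑ i ∈ Finset.univ.filter (fun i => gr i = g), x i ^ 2))
    (glEst : ℕ → (Fin p → ℝ) → (Fin p → ℝ))
    (hglEst : ∀ n x i, glEst n x i =
      if bnorm (gr i) x = 0 then 0
      else max (1 - lam n / ((n : ℝ) * bnorm (gr i) x)) 0 * x i)
    (hactive : ∀ g : Fin G, ∃ i, gr i = g ∧ β0 i ≠ 0)
    (C : Fin p → ℝ) (hC : ∀ i, C i = -(β0 i) / bnorm (gr i) β0) :
    ∀ ε > (0 : ℝ),
      Tendsto (fun n => μ n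
          {x | Real.sqrt (∑ i, ((n : ℝ) / lam n * (glEst n x i - β0 i) - C i) ^ 2) > ε})
        atTop (nhds 0) :=
  group_lasso_suboptimal_rate_general p G gr β0 σ μ hμ lam hlim1 hlim2 bnorm hbnorm glEst hglEst
    hactive C hC
end

section
/- (Deterministic core of Lemma 2) Let x ∈ ℝ^m with x ≠ 0, and let (x_n) be a sequence in ℝ^m such that the sequence (√n·‖x_n − x‖₂) is bounded. Let (λ_n) be positive reals with λ_n/√n → ∞ and λ_n/n → 0. Define g_n = (1 − λ_n/(n‖x_n‖₂))₊ · x_n (with g_n = 0 if x_n = 0). Then (n/λ_n)(g_n − x) → −x/‖x‖₂ as n → ∞. -/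
open Filter Classical

/-- **Deterministic core of Lemma 2.**  Let `x ∈ ℝ^m`, `x ≠ 0`, and let `(x_n)` be a
sequence in `ℝ^m` with `(√n ‖x_n - x‖₂)` bounded.  Let `(λ_n)` be positive reals with
`λ_n/√n → ∞` and `λ_n/n → 0`.  Define `g_n = (1 - λ_n/(n‖x_n‖₂))₊ x_n`
(with `g_n = 0` if `x_n = 0`).  Then `(n/λ_n)(g_n - x) → -x/‖x‖₂`. -/
theorem group_lasso_deterministic_core (m : ℕ)
    (x : EuclideanSpace ℝ (Fin m)) (hx : x ≠ 0)
    (xs : ℕ → EuclideanSpace ℝ (Fin m))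
    (hbdd : ∃ M : ℝ, ∀ n : ℕ, Real.sqrt (n : ℝ) * ‖xs n - x‖ ≤ M)
    (lam : ℕ → ℝ) (hlam : ∀ n, 0 < lam n)
    (hlim1 : Tendsto (fun n => lam n / Real.sqrt n) atTop atTop)
    (hlim2 : Tendsto (fun n => lam n / n) atTop (nhds 0))
    (g : ℕ → EuclideanSpace ℝ (Fin m))
    (hg : ∀ n, g n =
      if xs n = 0 then 0 else max (1 - lam n / ((n : ℝ) * ‖xs n‖)) 0 • xs n) :
    Tendsto (fun n : ℕ => ((n : ℝ) / lam n) • (g n - x)) atTop (nhds (-(‖x‖⁻¹ • x))) := by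
  obtain ⟨M, hM⟩ := hbdd
  have hxnorm : (0:ℝ) < ‖x‖ := norm_pos_iff.mpr hx
  -- √n / λ_n → 0
  have hinv : Tendsto (fun n : ℕ => Real.sqrt n / lam n) atTop (nhds 0) := by
    have := hlim1.inv_tendsto_atTop
    simpa [Pi.inv_def, inv_div] using this
  set a : ℕ → EuclideanSpace ℝ (Fin m) := fun n => ((n : ℝ) / lam n) • (xs n - x) with ha_def
  have ha : Tendsto a atTop (nhds 0) := by
    have hb : ∀ᶠ n in atTop, ‖a n‖ ≤ (fun n : ℕ => Real.sqrt n / lam n * M) n := by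
      filter_upwards [eventually_ge_atTop 1] with n hn
      have hn0 : (0:ℝ) ≤ (n:ℝ) := Nat.cast_nonneg n
      have hsq : Real.sqrt n * Real.sqrt n = (n:ℝ) := Real.mul_self_sqrt hn0
      have h1 : ‖a n‖ = ((n:ℝ) / lam n) * ‖xs n - x‖ := by
        rw [ha_def, norm_smul, Real.norm_eq_abs,
          abs_of_nonneg (div_nonneg hn0 (hlam n).le)]
      have h2 : ((n:ℝ) / lam n) * ‖xs n - x‖
          = (Real.sqrt n / lam n) * (Real.sqrt n * ‖xs n - x‖) := by
        have h3 : Real.sqrt n / lam n * (Real.sqrt n * ‖xs n - x‖)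
            = (Real.sqrt n * Real.sqrt n) / lam n * ‖xs n - x‖ := by ring
        rw [h3, hsq]
      rw [h1, h2]
      exact mul_le_mul_of_nonneg_left (hM n)
        (div_nonneg (Real.sqrt_nonneg _) (hlam n).le)
    exact squeeze_zero_norm' hb (by simpa using hinv.mul_const M)
  have hxs : Tendsto xs atTop (nhds x) := by
    rw [← tendsto_sub_nhds_zero_iff]
    have : Tendsto (fun n => (lam n / n) • a n) atTop (nhds 0) := by
      simpa using hlim2.smul ha
    apply this.congr'
    filter_upwards [eventually_ge_atTop 1] with n hn
    have hn0 : (n:ℝ) ≠ 0 := by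
      exact_mod_cast Nat.one_le_iff_ne_zero.mp hn
    rw [ha_def, smul_smul]
    rw [show lam n / n * ((n:ℝ) / lam n) = 1 by field_simp [hn0, (hlam n).ne']]
    rw [one_smul]
  have hnorm : Tendsto (fun n => ‖xs n‖) atTop (nhds ‖x‖) := hxs.norm
  have hne : ∀ᶠ n in atTop, xs n ≠ 0 := hxs.eventually_ne hx
  have ht : Tendsto (fun n => lam n / ((n:ℝ) * ‖xs n‖)) atTop (nhds 0) := by
    have : Tendsto (fun n => (lam n / n) * ‖xs n‖⁻¹) atTop (nhds (0 * ‖x‖⁻¹)) :=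
      hlim2.mul (hnorm.inv₀ hxnorm.ne')
    simpa [div_eq_mul_inv, mul_inv, mul_comm, mul_assoc, mul_left_comm] using this
  have htlt : ∀ᶠ n in atTop, lam n / ((n:ℝ) * ‖xs n‖) < 1 :=
    ht.eventually_lt_const one_pos
  have hF : Tendsto (fun n => a n - ‖xs n‖⁻¹ • xs n) atTop
      (nhds (-(‖x‖⁻¹ • x))) := by
    have : Tendsto (fun n => ‖xs n‖⁻¹ • xs n) atTop (nhds (‖x‖⁻¹ • x)) :=
      (hnorm.inv₀ hxnorm.ne').smul hxs
    simpa using ha.sub this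
  apply hF.congr'
  filter_upwards [eventually_ge_atTop 1, hne, htlt] with n hn hne htlt
  have hn0 : (n:ℝ) ≠ 0 := by exact_mod_cast Nat.one_le_iff_ne_zero.mp hn
  have hns : ‖xs n‖ ≠ 0 := norm_ne_zero_iff.mpr hne
  rw [hg n, if_neg hne, max_eq_left (by linarith), sub_smul, one_smul]
  simp only [ha_def]
  have hc : ((n:ℝ) / lam n) * (lam n / ((n:ℝ) * ‖xs n‖)) = ‖xs n‖⁻¹ := by
    rw [div_mul_div_comm, inv_eq_one_div,
      div_eq_div_iff (mul_ne_zero (hlam n).ne' (mul_ne_zero hn0 hns)) hns]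
    ring
  simp only [smul_sub, smul_smul, hc]
  abel
end

section
/- (Core of Theorem 2, active groups) Let m ≥ 1, π₀ ∈ (0,1), σ > 0, let (τ_n²) be positive reals with √n·τ_n² → ∞ and log(τ_n²)/n → 0, and let (x_n) be a sequence in ℝ^m with x_n → x for some x ≠ 0. Define B_n = 1/(1 + n·τ_n²) and l_n = π₀ / (π₀ + (1−π₀)·(1 + n·τ_n²)^{−m/2}·exp((1−B_n)·n·‖x_n‖₂²/(2σ²))). Then l_n → 0 as n → ∞. -/
open Filter Real

/-! Writing `T_n = n τ_n²`, the slab term is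
`(1 + T_n)^{-m/2} exp((1 - B_n) n ‖x_n‖²/(2σ²)) = exp(n (c_n - (m/2) log(1 + T_n)/n))` with
`c_n → ‖x‖²/(2σ²) > 0` because `B_n → 0`, while `log(1 + T_n)/n → 0` because
`log T_n = log n + log τ_n²` is `o(n)`. Hence the denominator of `l_n` tends to infinity. -/

theorem tendsto_natCast_mul_atTop_of_sqrt_mul {a : ℕ → ℝ} (ha : ∀ n, 0 ≤ a n)
    (h : Tendsto (fun n : ℕ => √(n : ℝ) * a n) atTop atTop) :
    Tendsto (fun n : ℕ => (n : ℝ) * a n) atTop atTop := by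
  refine tendsto_atTop_mono' atTop ?_ h
  filter_upwards [eventually_ge_atTop 1] with n hn
  have h1 : 1 ≤ √(n : ℝ) := one_le_sqrt.2 (by exact_mod_cast hn)
  calc √(n : ℝ) * a n ≤ √(n : ℝ) * (√(n : ℝ) * a n) :=
        le_mul_of_one_le_left (mul_nonneg (sqrt_nonneg _) (ha n)) h1
    _ = (n : ℝ) * a n := by rw [← mul_assoc, mul_self_sqrt (Nat.cast_nonneg n)]

theorem tendsto_log_one_add_natCast_mul_div {a : ℕ → ℝ} (ha : ∀ n, 0 < a n)
    (hT : Tendsto (fun n : ℕ => (n : ℝ) * a n) atTop atTop)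
    (hlog : Tendsto (fun n : ℕ => log (a n) / n) atTop (nhds 0)) :
    Tendsto (fun n : ℕ => log (1 + n * a n) / n) atTop (nhds 0) := by
  have hlogn : Tendsto (fun n : ℕ => log n / n) atTop (nhds 0) :=
    isLittleO_log_id_atTop.tendsto_div_nhds_zero.comp tendsto_natCast_atTop_atTop
  have hupper : Tendsto (fun n : ℕ => log 2 / n + log n / n + log (a n) / n)
      atTop (nhds 0) := by
    simpa using ((tendsto_const_div_atTop_nhds_zero_nat (log 2)).add hlogn).add hlog
  refine tendsto_of_tendsto_of_tendsto_of_le_of_le' tendsto_const_nhds hupper ?_ ?_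
  · filter_upwards with n
    have : 0 ≤ log (1 + n * a n) := log_nonneg (by nlinarith [ha n, n.cast_nonneg (α := ℝ)])
    positivity
  · filter_upwards [hT.eventually_ge_atTop 1, eventually_ge_atTop 1] with n hTn hn
    have hn' : (0 : ℝ) < n := by exact_mod_cast hn
    calc log (1 + n * a n) / n ≤ log (2 * (n * a n)) / n := by
          gcongr
          linarith
      _ = log 2 / n + log n / n + log (a n) / n := by
          rw [log_mul two_ne_zero (by positivity), log_mul hn'.ne' (ha n).ne']
          ring

theorem tendsto_rpow_mul_exp_natCast_mul_atTop {u v : ℕ → ℝ} {C : ℝ} (p : ℝ)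
    (hu : ∀ n, 0 < u n) (hlog : Tendsto (fun n : ℕ => log (u n) / n) atTop (nhds 0))
    (hv : Tendsto v atTop (nhds C)) (hC : 0 < C) :
    Tendsto (fun n : ℕ => u n ^ p * exp (n * v n)) atTop atTop := by
  have hrate : Tendsto (fun n : ℕ => v n + p * (log (u n) / n)) atTop (nhds C) := by
    simpa using hv.add (hlog.const_mul p)
  refine (tendsto_exp_atTop.comp
    (tendsto_natCast_atTop_atTop.atTop_mul_pos hC hrate)).congr' ?_
  filter_upwards [eventually_ne_atTop 0] with n hn
  have hn' : (n : ℝ) ≠ 0 := Nat.cast_ne_zero.2 hn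
  rw [Function.comp_apply, rpow_def_of_pos (hu n), ← exp_add]
  congr 1
  field_simp
  ring

theorem bgl_ss_posterior_spike_prob_tendsto_zero_general (m : ℕ)
    (π₀ : ℝ) (hπ₁ : π₀ < 1) (σ : ℝ) (hσ : 0 < σ)
    (τ2 : ℕ → ℝ) (hτ2 : ∀ n, 0 < τ2 n)
    (hτlim : Tendsto (fun n : ℕ => Real.sqrt (n : ℝ) * τ2 n) atTop atTop)
    (hτlog : Tendsto (fun n : ℕ => Real.log (τ2 n) / (n : ℝ)) atTop (nhds 0))
    (x : ℕ → EuclideanSpace ℝ (Fin m)) (xlim : EuclideanSpace ℝ (Fin m))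
    (hxlim : xlim ≠ 0) (hx : Tendsto x atTop (nhds xlim))
    (B l : ℕ → ℝ)
    (hB : ∀ n : ℕ, B n = 1 / (1 + (n : ℝ) * τ2 n))
    (hl : ∀ n : ℕ, l n = π₀ /
      (π₀ + (1 - π₀) * (1 + (n : ℝ) * τ2 n) ^ (-(m : ℝ) / 2) *
        Real.exp ((1 - B n) * (n : ℝ) * ‖x n‖ ^ 2 / (2 * σ ^ 2)))) :
    Tendsto l atTop (nhds 0) := by
  have hT := tendsto_natCast_mul_atTop_of_sqrt_mul (fun n => (hτ2 n).le) hτlim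
  have hB0 : Tendsto B atTop (nhds 0) := by
    refine (tendsto_inv_atTop_zero.comp (tendsto_atTop_add_const_left _ 1 hT)).congr
      fun n => ?_
    simp [hB, one_div]
  have hc : Tendsto (fun n => (1 - B n) * ‖x n‖ ^ 2 / (2 * σ ^ 2)) atTop
      (nhds (‖xlim‖ ^ 2 / (2 * σ ^ 2))) := by
    simpa using
      (((tendsto_const_nhds (x := (1 : ℝ))).sub hB0).mul (hx.norm.pow 2)).div_const (2 * σ ^ 2)
  have hslab := tendsto_rpow_mul_exp_natCast_mul_atTop (-(m : ℝ) / 2)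
    (fun n => by have := hτ2 n; positivity)
    (tendsto_log_one_add_natCast_mul_div hτ2 hT hτlog) hc
    (by have := norm_pos_iff.2 hxlim; positivity)
  have hden := tendsto_atTop_add_const_left _ π₀ (hslab.const_mul_atTop (sub_pos.2 hπ₁))
  rw [funext hl]
  refine tendsto_const_nhds.div_atTop (hden.congr fun n => ?_)
  rw [← mul_assoc]
  congr 3
  ring

/-- **Core of Theorem 2, active groups.**  With `B_n = 1/(1 + n τ_n²)` and
`l_n = π₀ / (π₀ + (1-π₀) (1 + n τ_n²)^{-m/2} exp((1-B_n) n ‖x_n‖₂²/(2σ²)))`,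
if `√n τ_n² → ∞`, `log(τ_n²)/n → 0`, and `x_n → x ≠ 0` in `ℝ^m`, then the
posterior spike probability `l_n → 0`. -/
theorem bgl_ss_posterior_spike_prob_tendsto_zero (m : ℕ) (hm : 1 ≤ m)
    (π₀ : ℝ) (hπ₀ : 0 < π₀) (hπ₁ : π₀ < 1) (σ : ℝ) (hσ : 0 < σ)
    (τ2 : ℕ → ℝ) (hτ2 : ∀ n, 0 < τ2 n)
    (hτlim : Tendsto (fun n : ℕ => Real.sqrt (n : ℝ) * τ2 n) atTop atTop)
    (hτlog : Tendsto (fun n : ℕ => Real.log (τ2 n) / (n : ℝ)) atTop (nhds 0))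
    (x : ℕ → EuclideanSpace ℝ (Fin m)) (xlim : EuclideanSpace ℝ (Fin m))
    (hxlim : xlim ≠ 0) (hx : Tendsto x atTop (nhds xlim))
    (B l : ℕ → ℝ)
    (hB : ∀ n : ℕ, B n = 1 / (1 + (n : ℝ) * τ2 n))
    (hl : ∀ n : ℕ, l n = π₀ /
      (π₀ + (1 - π₀) * (1 + (n : ℝ) * τ2 n) ^ (-(m : ℝ) / 2) *
        Real.exp ((1 - B n) * (n : ℝ) * ‖x n‖ ^ 2 / (2 * σ ^ 2)))) :
    Tendsto l atTop (nhds 0) :=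
  bgl_ss_posterior_spike_prob_tendsto_zero_general m π₀ hπ₁ σ hσ τ2 hτ2 hτlim hτlog x xlim hxlim hx
    B l hB hl
end

section
/- (Laplace-transform identity underlying the scale-mixture representations) For all real numbers a ≥ 0 and b > 0, ∫₀^∞ t^{−1/2} · exp(−a/t − b·t) dt = √(π/b) · exp(−2√(a·b)). -/
/-!
Substituting `t = u²` turns the integral into `2 ∫₀^∞ exp (-a/u² - b u²) du`, and completing the
square gives `-a/u² - b u² = -(√b u - √a/u)² - 2√(ab)`. What remains is the Cauchy–Schlömilch
transformation `∫₀^∞ f (q u - p/u) du = q⁻¹ ∫₀^∞ f` for even integrable `f`, applied to the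
Gaussian: `v = q u - p/u` maps `(0, ∞)` onto `ℝ` with Jacobian `q + p/u²`, and the involution
`u ↦ (p/q)/u`, which negates `v`, shows that the two halves of the Jacobian contribute equally.
-/

open MeasureTheory Real Set

theorem integral_comp_div_Ioi {E : Type*} [NormedAddCommGroup E] [NormedSpace ℝ E]
    (F : ℝ → E) {c : ℝ} (hc : 0 < c) :
    ∫ u in Ioi 0, (c / u ^ 2) • F (c / u) = ∫ u in Ioi 0, F u := by
  have himage : (c / ·) '' Ioi (0 : ℝ) = Ioi 0 := by
    ext v
    refine ⟨fun ⟨u, hu, huv⟩ ↦ huv ▸ div_pos hc hu, fun hv ↦ ⟨c / v, div_pos hc hv, ?_⟩⟩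
    field_simp [(mem_Ioi.mp hv).ne']
  have hderiv : ∀ u ∈ Ioi (0 : ℝ), HasDerivWithinAt (c / ·) (-(c / u ^ 2)) (Ioi 0) u := by
    intro u hu
    simpa [div_eq_mul_inv] using
      ((hasDerivAt_inv (mem_Ioi.mp hu).ne').const_mul c).hasDerivWithinAt
  have hinj : InjOn (c / ·) (Ioi (0 : ℝ)) := fun u hu v hv huv ↦ by
    rw [div_eq_div_iff (mem_Ioi.mp hu).ne' (mem_Ioi.mp hv).ne'] at huv
    exact (mul_left_cancel₀ hc.ne' huv).symm
  conv_rhs =>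
    rw [← himage, integral_image_eq_integral_abs_deriv_smul measurableSet_Ioi hderiv hinj]
  refine setIntegral_congr_fun measurableSet_Ioi fun u hu ↦ ?_
  rw [abs_neg, abs_of_pos (div_pos hc (pow_pos hu 2))]

theorem hasDerivAt_mul_sub_div (q p : ℝ) {u : ℝ} (hu : u ≠ 0) :
    HasDerivAt (fun u ↦ q * u - p / u) (q + p / u ^ 2) u := by
  have hlin : HasDerivAt (fun u ↦ q * u) q u := by simpa using (hasDerivAt_id u).const_mul q
  have hdiv : HasDerivAt (fun u ↦ p / u) (-(p / u ^ 2)) u := by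
    simpa [div_eq_mul_inv] using (hasDerivAt_inv hu).const_mul p
  rw [← sub_neg_eq_add]
  exact hlin.sub hdiv

theorem strictMonoOn_mul_sub_div {p q : ℝ} (hp : 0 ≤ p) (hq : 0 < q) :
    StrictMonoOn (fun u ↦ q * u - p / u) (Ioi 0) := fun u hu v _ huv ↦ by
  have : p / v ≤ p / u := div_le_div_of_nonneg_left hp hu huv.le
  have : q * u < q * v := by gcongr
  dsimp only
  linarith

theorem image_mul_sub_div_Ioi {p q : ℝ} (hp : 0 < p) (hq : 0 < q) :
    (fun u ↦ q * u - p / u) '' Ioi 0 = univ := by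
  refine eq_univ_of_forall fun y ↦ ?_
  -- the positive root of `q u² - y u - p = 0`
  set d := √(y ^ 2 + 4 * p * q)
  have hd : d ^ 2 = y ^ 2 + 4 * p * q := sq_sqrt (by positivity)
  have hyd : -y < d := by
    have : |y| < d := by
      rw [← sqrt_sq_eq_abs]; exact sqrt_lt_sqrt (sq_nonneg y) (by nlinarith)
    linarith [neg_le_abs y]
  refine ⟨(y + d) / (2 * q), div_pos (by linarith : 0 < y + d) (by positivity), ?_⟩
  have : y + d ≠ 0 := by linarith
  field_simp
  nlinarith

theorem Function.Even.integral_eq_two_mul_integral_Ioi {f : ℝ → ℝ} (hf : f.Even) :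
    ∫ x, f x = 2 * ∫ x in Ioi 0, f x := by
  rw [← integral_comp_abs]
  congr 1 with x
  rcases abs_choice x with hx | hx <;> rw [hx]
  exact (hf x).symm

section CauchySchlomilch

variable {p q : ℝ}

theorem integral_Ioi_deriv_mul_comp_mul_sub_div (hp : 0 < p) (hq : 0 < q) (f : ℝ → ℝ) :
    ∫ u in Ioi 0, (q + p / u ^ 2) * f (q * u - p / u) = ∫ v, f v := by
  conv_rhs => rw [← setIntegral_univ, ← image_mul_sub_div_Ioi hp hq,
    integral_image_eq_integral_abs_deriv_smul measurableSet_Ioi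
      (fun u hu ↦ (hasDerivAt_mul_sub_div q p (mem_Ioi.mp hu).ne').hasDerivWithinAt)
      (strictMonoOn_mul_sub_div hp.le hq).injOn]
  refine setIntegral_congr_fun measurableSet_Ioi fun u hu ↦ ?_
  rw [smul_eq_mul, abs_of_pos (by have := mem_Ioi.mp hu; positivity)]

theorem integrableOn_deriv_mul_comp_mul_sub_div (hp : 0 < p) (hq : 0 < q) {f : ℝ → ℝ}
    (hf : Integrable f) :
    IntegrableOn (fun u ↦ (q + p / u ^ 2) * f (q * u - p / u)) (Ioi 0) := by
  have habs := (integrableOn_image_iff_integrableOn_abs_deriv_smul measurableSet_Ioi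
      (fun u hu ↦ (hasDerivAt_mul_sub_div q p (mem_Ioi.mp hu).ne').hasDerivWithinAt)
      (strictMonoOn_mul_sub_div hp.le hq).injOn f).mp
    (by rw [image_mul_sub_div_Ioi hp hq]; exact hf.integrableOn)
  refine habs.congr_fun (fun u hu ↦ ?_) measurableSet_Ioi
  dsimp only
  rw [smul_eq_mul, abs_of_pos (by have := mem_Ioi.mp hu; positivity)]

theorem integrableOn_comp_mul_sub_div (hp : 0 < p) (hq : 0 < q) {f : ℝ → ℝ}
    (hf : Integrable f) : IntegrableOn (fun u ↦ f (q * u - p / u)) (Ioi 0) := by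
  -- the Jacobian `q + p / u²` is at least `q`, so dividing by it keeps integrability
  refine ((integrableOn_deriv_mul_comp_mul_sub_div hp hq hf).bdd_mul
    (f := fun u ↦ (q + p / u ^ 2)⁻¹) (c := q⁻¹) ?_ ?_).congr ?_
  · exact (by fun_prop : Measurable fun u : ℝ ↦ (q + p / u ^ 2)⁻¹).aestronglyMeasurable
  · filter_upwards with u
    rw [norm_inv, norm_of_nonneg (by positivity)]
    exact inv_anti₀ hq (le_add_of_nonneg_right (by positivity))
  · filter_upwards [ae_restrict_mem measurableSet_Ioi] with u hu
    have hjac : 0 < q + p / u ^ 2 := by have := mem_Ioi.mp hu; positivity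
    rw [← mul_assoc, inv_mul_cancel₀ hjac.ne', one_mul]

theorem integral_Ioi_comp_mul_sub_div_of_even (hp : 0 ≤ p) (hq : 0 < q) {f : ℝ → ℝ}
    (hf : f.Even) (hfi : Integrable f) :
    ∫ u in Ioi 0, f (q * u - p / u) = q⁻¹ * ∫ v in Ioi 0, f v := by
  rcases hp.eq_or_lt with rfl | hp
  · simp only [zero_div, sub_zero]
    rw [integral_comp_mul_left_Ioi _ _ hq, mul_zero, smul_eq_mul]
  set I := ∫ u in Ioi 0, f (q * u - p / u)
  have hI := integrableOn_comp_mul_sub_div hp hq hfi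
  have hinv : ∫ u in Ioi 0, p / u ^ 2 * f (q * u - p / u) = q * I := by
    rw [← integral_comp_div_Ioi _ (div_pos hp hq), ← integral_const_mul]
    refine setIntegral_congr_fun measurableSet_Ioi fun u hu ↦ ?_
    have hu : u ≠ 0 := (mem_Ioi.mp hu).ne'
    have hswap : q * (p / q / u) - p / (p / q / u) = -(q * u - p / u) := by
      field_simp; ring
    rw [smul_eq_mul, hswap, hf]
    field_simp
  have hsplit : ∫ u in Ioi 0, p / u ^ 2 * f (q * u - p / u) = (∫ v, f v) - q * I := by
    rw [← integral_Ioi_deriv_mul_comp_mul_sub_div hp hq, ← integral_const_mul,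
      ← integral_sub (integrableOn_deriv_mul_comp_mul_sub_div hp hq hfi) (hI.const_mul q)]
    congr 1 with u
    ring
  rw [hinv, hf.integral_eq_two_mul_integral_Ioi] at hsplit
  field_simp
  linarith

end CauchySchlomilch

theorem neg_div_sq_sub_mul_sq_eq {a b u : ℝ} (ha : 0 ≤ a) (hb : 0 ≤ b) (hu : u ≠ 0) :
    -a / u ^ 2 - b * u ^ 2 = -(√b * u - √a / u) ^ 2 + -2 * √(a * b) := by
  rw [sqrt_mul ha]
  field_simp
  linear_combination sq_sqrt ha + u ^ 4 * sq_sqrt hb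

/-- **Laplace-transform identity underlying the scale-mixture representations.**
For all `a ≥ 0` and `b > 0`,
`∫₀^∞ t^{-1/2} exp(-a/t - b t) dt = √(π/b) exp(-2 √(a b))`. -/
theorem laplace_transform_identity (a b : ℝ) (ha : 0 ≤ a) (hb : 0 < b) :
    ∫ t in Set.Ioi (0 : ℝ), t ^ (-(1 : ℝ) / 2) * Real.exp (-a / t - b * t) =
      Real.sqrt (Real.pi / b) * Real.exp (-2 * Real.sqrt (a * b)) := by
  have hgauss : ∫ u in Ioi 0, exp (-(√b * u - √a / u) ^ 2) = (√b)⁻¹ * (√π / 2) := by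
    rw [integral_Ioi_comp_mul_sub_div_of_even (sqrt_nonneg a) (sqrt_pos.2 hb)
      (f := fun v ↦ exp (-v ^ 2)) (fun v ↦ by simp)
      (by simpa using integrable_exp_neg_mul_sq one_pos)]
    congr 1
    simpa using integral_gaussian_Ioi 1
  rw [← integral_comp_rpow_Ioi_of_pos zero_lt_two]
  calc _ = ∫ u in Ioi 0, 2 * exp (-2 * √(a * b)) * exp (-(√b * u - √a / u) ^ 2) := by
        refine setIntegral_congr_fun measurableSet_Ioi fun u hu ↦ ?_
        have hu : 0 < u := hu
        have hpow : (u ^ (2 : ℝ)) ^ (-(1 : ℝ) / 2) = u⁻¹ := by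
          rw [← rpow_mul hu.le]; norm_num [rpow_neg_one]
        rw [hpow, rpow_two, neg_div_sq_sub_mul_sq_eq ha hb.le hu.ne', exp_add, smul_eq_mul]
        norm_num
        field_simp
    _ = _ := by
        rw [integral_const_mul, hgauss, sqrt_div' _ hb.le]
        field_simp
end

section
/- (Appendix A: propriety of the Bayesian sparse group lasso hyperprior) For every integer m ≥ 1 and reals λ₁, λ₂ > 0, the function h(t₁,…,t_m, γ) = [∏_{j=1}^m t_j^{−1/2}·(1/t_j + 1/γ)^{−1/2}] · γ^{−1/2} · exp(−(λ₁²/2)·Σ_{j=1}^m t_j − (λ₂²/2)·γ) is integrable over (0,∞)^m × (0,∞) with respect to Lebesgue measure; i.e., ∫_{(0,∞)^{m+1}} h < ∞, so the prior in equation (3.4) is proper. -/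
/-!
Each coupling factor `t^(-1/2) (1/t + 1/γ)^(-1/2) = (1 + t/γ)^(-1/2)` is at most one, so on
the positive orthant the integrand is dominated by `∏ⱼ exp(-λ₁²/2 tⱼ) · γ^(-1/2) exp(-λ₂²/2 γ)`,
a product of integrable functions of one variable each.
-/

open MeasureTheory Real Set

theorem rpow_mul_inv_add_rpow_le_one {t u p : ℝ} (ht : 0 < t) (hu : 0 ≤ u) (hp : p ≤ 0) :
    t ^ p * (t⁻¹ + u) ^ p ≤ 1 := by
  rw [← mul_rpow ht.le (by positivity), mul_add, mul_inv_cancel₀ ht.ne']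
  exact rpow_le_one_of_one_le_of_nonpos (le_add_of_nonneg_right (by positivity)) hp

theorem IntegrableOn.pi_prod_mul {ι α β 𝕜 : Type*} [Fintype ι] [NormedCommRing 𝕜]
    [MeasurableSpace α] [MeasurableSpace β] {μ : Measure α} {ν : Measure β}
    [SigmaFinite μ] [SFinite ν]
    {f : α → 𝕜} {g : β → 𝕜} {s : Set α} {t : Set β}
    (hf : IntegrableOn f s μ) (hg : IntegrableOn g t ν) :
    IntegrableOn (fun q : (ι → α) × β => (∏ j, f (q.1 j)) * g q.2)
      ((univ.pi fun _ => s) ×ˢ t) ((Measure.pi fun _ => μ).prod ν) := by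
  rw [IntegrableOn, ← Measure.prod_restrict, Measure.restrict_pi_pi]
  exact (Integrable.fintype_prod fun _ => hf).mul_prod hg

theorem norm_hyperprior_le {ι : Type*} [Fintype ι] {t : ι → ℝ} {γ a b p : ℝ}
    (ht : ∀ j, 0 < t j) (hγ : 0 < γ) (hp : p ≤ 0) :
    ‖(∏ j, t j ^ p * ((t j)⁻¹ + γ⁻¹) ^ p) * γ ^ p * exp (-a * (∑ j, t j) - b * γ)‖ ≤
      (∏ j, exp (-a * t j)) * (γ ^ p * exp (-b * γ)) := by
  have hfactor_nonneg : ∀ j, 0 ≤ t j ^ p * ((t j)⁻¹ + γ⁻¹) ^ p := fun j => by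
    have := ht j; positivity
  have hprod_nonneg := Finset.prod_nonneg fun j (_ : j ∈ Finset.univ) => hfactor_nonneg j
  have hexp : exp (-a * (∑ j, t j) - b * γ) = (∏ j, exp (-a * t j)) * exp (-b * γ) := by
    rw [← exp_sum, ← exp_add, Finset.mul_sum]; ring_nf
  rw [norm_of_nonneg (by positivity), hexp]
  calc (∏ j, t j ^ p * ((t j)⁻¹ + γ⁻¹) ^ p) * γ ^ p * ((∏ j, exp (-a * t j)) * exp (-b * γ))
      ≤ 1 * γ ^ p * ((∏ j, exp (-a * t j)) * exp (-b * γ)) := by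
        gcongr
        exact Finset.prod_le_one (fun j _ => hfactor_nonneg j) fun j _ =>
            rpow_mul_inv_add_rpow_le_one (ht j) (inv_nonneg.2 hγ.le) hp
    _ = (∏ j, exp (-a * t j)) * (γ ^ p * exp (-b * γ)) := by ring

theorem bsgl_hyperprior_proper_general (m : ℕ)
    (lam₁ lam₂ : ℝ) (hlam₁ : 0 < lam₁) (hlam₂ : 0 < lam₂) :
    IntegrableOn
      (fun q : (Fin m → ℝ) × ℝ =>
        (∏ j : Fin m, (q.1 j) ^ (-(1 : ℝ) / 2) *
            ((q.1 j)⁻¹ + q.2⁻¹) ^ (-(1 : ℝ) / 2)) *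
          q.2 ^ (-(1 : ℝ) / 2) *
          Real.exp (-(lam₁ ^ 2 / 2) * (∑ j, q.1 j) - lam₂ ^ 2 / 2 * q.2))
      ((Set.univ.pi fun _ : Fin m => Set.Ioi (0 : ℝ)) ×ˢ Set.Ioi (0 : ℝ))
      volume := by
  have hS : MeasurableSet ((univ.pi fun _ : Fin m => Ioi (0 : ℝ)) ×ˢ Ioi (0 : ℝ)) :=
    (MeasurableSet.univ_pi fun _ => measurableSet_Ioi).prod measurableSet_Ioi
  have hdom : IntegrableOn (fun q : (Fin m → ℝ) × ℝ => (∏ j, exp (-(lam₁ ^ 2 / 2) * q.1 j)) *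
      (q.2 ^ (-(1 : ℝ) / 2) * exp (-(lam₂ ^ 2 / 2) * q.2)))
      ((univ.pi fun _ : Fin m => Ioi (0 : ℝ)) ×ˢ Ioi (0 : ℝ)) volume := by
    have hγ_int : IntegrableOn (fun γ : ℝ => γ ^ (-(1 : ℝ) / 2) * exp (-(lam₂ ^ 2 / 2) * γ))
        (Ioi 0) := by
      simpa using integrableOn_rpow_mul_exp_neg_mul_rpow (p := 1) (by norm_num) one_pos
        (by positivity : 0 < lam₂ ^ 2 / 2)
    rw [Measure.volume_eq_prod, volume_pi]
    exact IntegrableOn.pi_prod_mul (exp_neg_integrableOn_Ioi 0 (by positivity)) hγ_int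
  refine hdom.mono' (by fun_prop) ?_
  filter_upwards [ae_restrict_mem hS] with q ⟨ht, hγ⟩
  simpa only [neg_mul] using norm_hyperprior_le (a := lam₁ ^ 2 / 2) (b := lam₂ ^ 2 / 2)
    (fun j => ht j (mem_univ j)) hγ (by norm_num)

/-- **Appendix A: propriety of the Bayesian sparse group lasso hyperprior.**
For every `m ≥ 1` and `λ₁, λ₂ > 0`, the function
`h(t₁,…,t_m, γ) = [∏_j t_j^{-1/2} (1/t_j + 1/γ)^{-1/2}] γ^{-1/2}
  exp(-(λ₁²/2) ∑_j t_j - (λ₂²/2) γ)`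
is integrable over `(0,∞)^m × (0,∞)` with respect to Lebesgue measure, so the
prior (3.4) is proper. -/
theorem bsgl_hyperprior_proper (m : ℕ) (hm : 1 ≤ m)
    (lam₁ lam₂ : ℝ) (hlam₁ : 0 < lam₁) (hlam₂ : 0 < lam₂) :
    IntegrableOn
      (fun q : (Fin m → ℝ) × ℝ =>
        (∏ j : Fin m, (q.1 j) ^ (-(1 : ℝ) / 2) *
            ((q.1 j)⁻¹ + q.2⁻¹) ^ (-(1 : ℝ) / 2)) *
          q.2 ^ (-(1 : ℝ) / 2) *
          Real.exp (-(lam₁ ^ 2 / 2) * (∑ j, q.1 j) - lam₂ ^ 2 / 2 * q.2))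
      ((Set.univ.pi fun _ : Fin m => Set.Ioi (0 : ℝ)) ×ˢ Set.Ioi (0 : ℝ))
      volume :=
  bsgl_hyperprior_proper_general m lam₁ lam₂ hlam₁ hlam₂
end
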